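/- Let B be a finite group, let A be a subgroup of B, let α be an automorphism of A, let β be an automorphism of B with β(A) = A, and let n ≥ 1 be such that αⁿ(x) = β(x) for all x ∈ A. Then there exist a finite group C, an injective group homomorphism e : B → C, and an automorphism γ of C such that γ(e(x)) = e(α(x)) for all x ∈ A and γⁿ(e(y)) = e(β(y)) for all y ∈ B. -/

import Mathlib

/-!
Let `K` be the cyclic group generated by the pair `(β, αⁿ)`, acting on `B` and on `A`. In
`G = B ⋊ K` the automorphism `β` becomes conjugation by the generator `t`, and `α` extends to an
automorphism `θ` of `H = A ⋊ K ≤ G` that fixes `t` and satisfies `θⁿ = conj t`. On `H × ℤ/n`, the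
permutation "apply `θ` and go up one level, multiplying on the left by `t⁻¹` when wrapping around"
is `θ`-semilinear for right multiplication by `H`, and its `n`-th power is right multiplication by
`t⁻¹`. Transporting it along a transversal of `H` in `G` gives a permutation `φ` of `G × ℤ/n` with
the same two properties for `G`, and conjugation by `φ` on `Perm (G × ℤ/n) ⊇ G ⊇ B` is the
required `γ`.
-/

open Equiv SemidirectProduct

section RightRegular

variable (G Z : Type*) [Group G]

def rightRegularPerm : G →* Perm (G × Z) where
  toFun g := prodCongr (Equiv.mulRight g⁻¹) (Equiv.refl Z)
  map_one' := by ext <;> simp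
  map_mul' g h := by ext <;> simp [mul_assoc]

variable {G Z}

@[simp]
theorem rightRegularPerm_apply (g : G) (x : G × Z) :
    rightRegularPerm G Z g x = (x.1 * g⁻¹, x.2) := rfl

theorem rightRegularPerm_injective [Nonempty Z] : Function.Injective (rightRegularPerm G Z) := by
  intro g h hgh
  obtain ⟨z⟩ := ‹Nonempty Z›
  simpa using congrArg (fun σ : Perm (G × Z) => (σ (1, z)).1) hgh

end RightRegular

theorem Nat.add_one_div_eq_mod_add_one_div_add_div (a : ℕ) {n : ℕ} (hn : 0 < n) :
    (a + 1) / n = (a % n + 1) / n + a / n := by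
  conv_lhs => rw [← Nat.mod_add_div a n, add_right_comm, Nat.add_mul_div_left _ _ hn]

section LevelShift

variable {H : Type*} [Group H]

/- For `y = (x, i)` the exponent `(i.val + 1) / n` is `1` if `i = n - 1` and `0` otherwise, so `x`
is multiplied by `c` exactly when wrapping around from level `n - 1` to level `0`. -/
def levelShift (c : H) (n : ℕ) : Perm (H × ZMod n) where
  toFun y := (c ^ ((y.2.val + 1) / n) * y.1, y.2 + 1)
  invFun y := ((c ^ (((y.2 - 1).val + 1) / n))⁻¹ * y.1, y.2 - 1)
  left_inv y := by simp
  right_inv y := by simp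

theorem levelShift_pow_apply (c : H) (n : ℕ) [NeZero n] (m : ℕ) (y : H × ZMod n) :
    (levelShift c n ^ m) y = (c ^ ((y.2.val + m) / n) * y.1, y.2 + m) := by
  induction m with
  | zero => simp [Nat.div_eq_of_lt (ZMod.val_lt y.2)]
  | succ m ih =>
    rw [pow_succ', Perm.mul_apply, ih]
    simp only [levelShift, coe_fn_mk, ZMod.val_add, ZMod.val_natCast, Nat.add_mod_mod,
      ← mul_assoc, ← pow_add, Nat.cast_succ, add_assoc]
    rw [← Nat.add_one_div_eq_mod_add_one_div_add_div _ (Nat.pos_of_neZero n), add_assoc]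

theorem levelShift_pow_self (c : H) (n : ℕ) [NeZero n] (y : H × ZMod n) :
    (levelShift c n ^ n) y = (c * y.1, y.2) := by
  rw [levelShift_pow_apply, Nat.add_div_right _ (Nat.pos_of_neZero n),
    Nat.div_eq_of_lt (ZMod.val_lt y.2), ZMod.natCast_self]
  simp

theorem exists_perm_conj_rightRegularPerm (θ : MulAut H) (u : H) (hu : θ u = u) (n : ℕ)
    [NeZero n] (hθ : θ ^ n = MulAut.conj u) :
    ∃ ψ : Perm (H × ZMod n),
      (∀ h, MulAut.conj ψ (rightRegularPerm H _ h) = rightRegularPerm H _ (θ h)) ∧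
      ψ ^ n = rightRegularPerm H _ u := by
  set Θ : Perm (H × ZMod n) := prodCongr θ.toEquiv (Equiv.refl _)
  have hΘ (m : ℕ) (y : H × ZMod n) : (Θ ^ m) y = ((θ ^ m) y.1, y.2) := by
    induction m with
    | zero => rfl
    | succ m ih => rw [pow_succ', Perm.mul_apply, ih, pow_succ', MulAut.mul_apply]; rfl
  have hcomm : Commute (levelShift u⁻¹ n) Θ := by
    ext y <;> simp [Θ, levelShift, hu]
  refine ⟨levelShift u⁻¹ n * Θ, fun h => ?_, ?_⟩
  · rw [MulAut.conj_apply, mul_inv_eq_iff_eq_mul]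
    ext y <;> simp [Θ, levelShift, mul_assoc]
  · ext y <;> simp [hcomm.mul_pow, levelShift_pow_self, hΘ, hθ, mul_assoc]

end LevelShift

theorem MonoidHom.exists_equiv_prod_map_mul {G H : Type*} [Group G] [Group H] (ι : H →* G)
    (hι : Function.Injective ι) :
    ∃ (S : Set G) (T : G ≃ S × H), ∀ g h, T (g * ι h) = ((T g).1, (T g).2 * h) := by
  obtain ⟨S, hS, -⟩ := ι.range.exists_isComplement_left 1
  refine ⟨S, hS.equiv.trans (prodCongr (Equiv.refl S) (MonoidHom.ofInjective hι).symm.toEquiv),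
    fun g h => ?_⟩
  have := hS.equiv_mul_right g (MonoidHom.ofInjective hι h)
  rw [MonoidHom.ofInjective_apply] at this
  rw [Equiv.trans_apply, this]
  refine Prod.ext rfl ?_
  change (MonoidHom.ofInjective hι).symm (_ * _) =
    (MonoidHom.ofInjective hι).symm (hS.equiv g).2 * h
  rw [map_mul, MulEquiv.symm_apply_apply]

@[simps]
def Equiv.Perm.prodCongrRightHom (S : Type*) {Y : Type*} : Perm Y →* Perm (S × Y) where
  toFun σ := prodCongr (Equiv.refl S) σ
  map_one' := rfl
  map_mul' _ _ := rfl

theorem exists_permHom_comp_rightRegularPerm {G H : Type*} [Group G] [Group H] (ι : H →* G)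
    (hι : Function.Injective ι) (Z : Type*) :
    ∃ F : Perm (H × Z) →* Perm (G × Z),
      F.comp (rightRegularPerm H Z) = (rightRegularPerm G Z).comp ι := by
  obtain ⟨S, T, hT⟩ := ι.exists_equiv_prod_map_mul hι
  let D : G × Z ≃ S × (H × Z) := (prodCongr T (Equiv.refl Z)).trans (prodAssoc _ _ _)
  refine ⟨D.symm.permCongrHom.toMonoidHom.comp (Perm.prodCongrRightHom S), ?_⟩
  ext h x : 2
  rw [MonoidHom.comp_apply, MonoidHom.comp_apply, MulEquiv.coe_toMonoidHom,
    Equiv.permCongrHom_coe, Equiv.permCongr_apply, Equiv.symm_symm, Equiv.symm_apply_eq]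
  simp [D, ← map_inv, hT]

theorem exists_perm_conj_rightRegularPerm_of_injective {G H : Type*} [Group G] [Group H]
    (ι : H →* G) (hι : Function.Injective ι) (θ : MulAut H) (u : H) (hu : θ u = u)
    (n : ℕ) [NeZero n] (hθ : θ ^ n = MulAut.conj u) :
    ∃ φ : Perm (G × ZMod n),
      (∀ h, MulAut.conj φ (rightRegularPerm G _ (ι h)) = rightRegularPerm G _ (ι (θ h))) ∧
      φ ^ n = rightRegularPerm G _ (ι u) := by
  obtain ⟨ψ, hψθ, hψn⟩ := exists_perm_conj_rightRegularPerm θ u hu n hθ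
  obtain ⟨F, hF⟩ := exists_permHom_comp_rightRegularPerm ι hι (ZMod n)
  have hFρ (h : H) : F (rightRegularPerm H _ h) = rightRegularPerm G _ (ι h) :=
    DFunLike.congr_fun hF h
  refine ⟨F ψ, fun h => ?_, by rw [← map_pow, hψn, hFρ]⟩
  rw [← hFρ, ← hFρ, ← hψθ, MulAut.conj_apply, MulAut.conj_apply, map_mul, map_mul, map_inv]

instance SemidirectProduct.instFinite {N G : Type*} [Group N] [Group G] [Finite N] [Finite G]
    {φ : G →* MulAut N} : Finite (N ⋊[φ] G) :=
  Finite.of_equiv _ equivProd.symm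

section PairPowers

variable {B : Type*} [Group B] {A : Subgroup B}

theorem coe_snd_apply_of_mem_zpowers [Finite B] {f : MulAut B} {g : MulAut A}
    (hfg : ∀ a, (g a : B) = f a) {k : MulAut B × MulAut A} (hk : k ∈ Subgroup.zpowers (f, g))
    (a : A) : (k.2 a : B) = k.1 a := by
  obtain ⟨m, rfl⟩ := mem_powers_iff_mem_zpowers.mpr hk
  clear hk
  induction m generalizing a with
  | zero => rfl
  | succ m ih => simp only [pow_succ, Prod.snd_mul, Prod.fst_mul, MulAut.mul_apply, ih, hfg]

theorem commute_snd_of_mem_zpowers {f : MulAut B} {g α : MulAut A} (hg : Commute α g)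
    {k : MulAut B × MulAut A} (hk : k ∈ Subgroup.zpowers (f, g)) : Commute α k.2 := by
  obtain ⟨m, rfl⟩ := hk
  exact hg.zpow_right m

end PairPowers

namespace RootExtension

variable {B : Type*} [Group B] {A : Subgroup B} (α : MulAut A) (β : MulAut B) (n : ℕ)

/- Generating `K` by the pair `(β, αⁿ)` rather than by `β` lets `A ⋊ K` embed in `B ⋊ K` even
when `β` restricted to `A` has smaller order than `β`. -/
abbrev cyclic : Subgroup (MulAut B × MulAut A) := Subgroup.zpowers (β, α ^ n)

abbrev semidirectB := B ⋊[(MonoidHom.fst _ _).comp (cyclic α β n).subtype] cyclic α β n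

abbrev semidirectA := A ⋊[(MonoidHom.snd _ _).comp (cyclic α β n).subtype] cyclic α β n

def generator : cyclic α β n := ⟨(β, α ^ n), Subgroup.mem_zpowers _⟩

def extendedAut : MulAut (semidirectA α β n) :=
  SemidirectProduct.congr α (MulEquiv.refl _) fun k => MulEquiv.ext <|
    DFunLike.congr_fun (commute_snd_of_mem_zpowers ((Commute.refl α).pow_right n) k.2).eq

@[simp]
theorem extendedAut_inl (a : A) : extendedAut α β n (inl a) = inl (α a) := by
  apply SemidirectProduct.ext <;> simp [extendedAut]

theorem extendedAut_inr (k : cyclic α β n) : extendedAut α β n (inr k) = inr k := by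
  apply SemidirectProduct.ext <;> simp [extendedAut]

theorem extendedAut_pow_apply (m : ℕ) (h : semidirectA α β n) :
    (extendedAut α β n ^ m) h = ⟨(α ^ m) h.left, h.right⟩ := by
  induction m with
  | zero => rfl
  | succ m ih => rw [pow_succ', MulAut.mul_apply, ih, pow_succ', MulAut.mul_apply]; rfl

theorem extendedAut_pow : extendedAut α β n ^ n = MulAut.conj (inr (generator α β n)) := by
  ext h : 1
  apply SemidirectProduct.ext
  · simp [extendedAut_pow_apply, generator]
  · simp [extendedAut_pow_apply, generator, mul_comm']

theorem inr_generator_mul_inl_mul_inv (y : B) :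
    inr (generator α β n) * inl y * (inr (generator α β n))⁻¹ =
      (inl (β y) : semidirectB α β n) := by
  rw [← map_inv, ← inl_aut]
  rfl

variable [Finite B] (hpow : ∀ x : A, ((α ^ n) x : B) = β (x : B))

def inclusion : semidirectA α β n →* semidirectB α β n :=
  map A.subtype (MonoidHom.id _) fun k => MonoidHom.ext (coe_snd_apply_of_mem_zpowers hpow k.2)

theorem inclusion_injective : Function.Injective (inclusion α β n hpow) := fun _ _ hxy =>
  SemidirectProduct.ext (Subtype.val_injective (congrArg (·.left) hxy)) (congrArg (·.right) hxy)

@[simp]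
theorem inclusion_inl (a : A) : inclusion α β n hpow (inl a) = inl (a : B) := by
  simp [inclusion]

@[simp]
theorem inclusion_inr (k : cyclic α β n) : inclusion α β n hpow (inr k) = inr k := by
  simp [inclusion]

end RootExtension

open RootExtension in
theorem root_extension_of_automorphism_general
    (B : Type) [Group B] [Finite B] (A : Subgroup B)
    (α : MulAut A) (β : MulAut B)
    (n : ℕ) (hn : 1 ≤ n)
    (hpow : ∀ x : A, ((α ^ n) x : B) = β (x : B)) :
    ∃ (C : Type) (_ : Group C) (_ : Finite C) (e : B →* C) (γ : MulAut C),
      Function.Injective e ∧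
      (∀ x : A, γ (e (x : B)) = e (α x)) ∧
      (∀ y : B, (γ ^ n) (e y) = e (β y)) := by
  have : NeZero n := ⟨by omega⟩
  obtain ⟨φ, hφα, hφβ⟩ := exists_perm_conj_rightRegularPerm_of_injective
    (inclusion α β n hpow) (inclusion_injective α β n hpow) (extendedAut α β n)
    (inr (generator α β n)) (extendedAut_inr α β n _) n (extendedAut_pow α β n)
  refine ⟨Perm (semidirectB α β n × ZMod n), inferInstance, inferInstance,
    (rightRegularPerm _ _).comp inl, MulAut.conj φ,
    rightRegularPerm_injective.comp inl_injective, fun x => ?_, fun y => ?_⟩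
  · simpa using hφα (inl x)
  · rw [← map_pow, hφβ, inclusion_inr, MulAut.conj_apply, MonoidHom.comp_apply,
      MonoidHom.comp_apply, ← map_inv, ← map_mul, ← map_mul, inr_generator_mul_inl_mul_inv]

/-- **Taking roots of automorphisms of finite groups.**
Let `A ≤ B` be finite groups, `α` an automorphism of `A`, and `β` an automorphism of `B`
leaving `A` invariant such that `αⁿ = β ↾ A` for some `n ≥ 1`.  Then there exist a finite
group `C`, an embedding `e : B → C`, and an automorphism `γ` of `C` extending `α`
(through `e`) with `γⁿ` extending `β` (through `e`). -/
theorem root_extension_of_automorphism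
    (B : Type) [Group B] [Finite B] (A : Subgroup B)
    (α : MulAut A) (β : MulAut B)
    (hβA : Subgroup.map β.toMonoidHom A = A)
    (n : ℕ) (hn : 1 ≤ n)
    (hpow : ∀ x : A, ((α ^ n) x : B) = β (x : B)) :
    ∃ (C : Type) (_ : Group C) (_ : Finite C) (e : B →* C) (γ : MulAut C),
      Function.Injective e ∧
      (∀ x : A, γ (e (x : B)) = e (α x)) ∧
      (∀ y : B, (γ ^ n) (e y) = e (β y)) :=
  root_extension_of_automorphism_general B A α β n hn hpow
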